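/- arXiv:1506.08296 — 10 statements merged into one kernel-verified Lean document; each statement's English description precedes it below -/
import Mathlib

section
/- Let G be a finite group. The function d(x,y) = o(xy⁻¹) - 1 is a metric on G if and only if for all a, b ∈ G, o(ab) < o(a) + o(b), where o denotes element order. -/
theorem stmt_0 (G : Type*) [Group G] [Fintype G] :
    ((∀ x y : G, orderOf (x * y⁻¹) - 1 = 0 ↔ x = y) ∧
     (∀ x y : G, orderOf (x * y⁻¹) - 1 = orderOf (y * x⁻¹) - 1) ∧
     (∀ x y z : G, orderOf (x * z⁻¹) - 1 ≤
        (orderOf (x * y⁻¹) - 1) + (orderOf (y * z⁻¹) - 1))) ↔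
    (∀ a b : G, orderOf (a * b) < orderOf a + orderOf b) := by
  constructor
  · rintro ⟨h1, h2, h3⟩ a b
    have := h3 (a * b) b 1
    simp only [inv_one, mul_one, mul_inv_cancel_right] at this
    have ha := orderOf_pos a
    have hb := orderOf_pos b
    have hab := orderOf_pos (a * b)
    omega
  · intro h
    refine ⟨?_, ?_, ?_⟩
    · intro x y
      have hp := orderOf_pos (x * y⁻¹)
      constructor
      · intro hxy
        have h1 : orderOf (x * y⁻¹) = 1 := by omega
        have := orderOf_eq_one_iff.mp h1
        exact mul_inv_eq_one.mp this
      · rintro rfl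
        simp
    · intro x y
      have : (x * y⁻¹)⁻¹ = y * x⁻¹ := by group
      rw [← orderOf_inv (x * y⁻¹), this]
    · intro x y z
      have key : x * y⁻¹ * (y * z⁻¹) = x * z⁻¹ := by group
      have := h (x * y⁻¹) (y * z⁻¹)
      rw [key] at this
      have h1 := orderOf_pos (x * y⁻¹)
      have h2 := orderOf_pos (y * z⁻¹)
      omega
end

section
/- For every n ≥ 4, the dihedral group D₂ₙ of order 2n does not satisfy the CP₃ condition. -/
theorem stmt_8 (n : ℕ) (hn : 4 ≤ n) :
    ¬ (∀ a b : DihedralGroup n, orderOf (a * b) < orderOf a + orderOf b) := by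
  intro h
  have := h (DihedralGroup.sr 0) (DihedralGroup.sr 1)
  rw [DihedralGroup.sr_mul_sr, DihedralGroup.orderOf_sr, DihedralGroup.orderOf_sr] at this
  simp only [sub_zero] at this
  rw [DihedralGroup.orderOf_r_one] at this
  omega
end

section
/- For every n ≥ 4, the generalized quaternion group Q_{2ⁿ} of order 2ⁿ does not satisfy the CP₃ condition. -/
theorem stmt_9 (n : ℕ) (hn : 4 ≤ n) :
    ¬ (∀ a b : QuaternionGroup (2 ^ (n - 2)),
        orderOf (a * b) < orderOf a + orderOf b) := by
  set m := 2 ^ (n - 2) with hm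
  haveI : NeZero m := ⟨pow_ne_zero _ two_ne_zero⟩
  intro h
  have hmul : (QuaternionGroup.xa 0 : QuaternionGroup m) * QuaternionGroup.xa 1
      = QuaternionGroup.a ((m : ZMod (2 * m)) + 1) := by
    rw [QuaternionGroup.xa_mul_xa]; ring_nf
  have hm4 : 4 ≤ m := by
    calc 4 = 2 ^ 2 := rfl
    _ ≤ 2 ^ (n - 2) := Nat.pow_le_pow_right (by norm_num) (by omega)
  have hval : ((m : ZMod (2 * m)) + 1).val = m + 1 := by
    have : ((m : ZMod (2 * m)) + 1) = ((m + 1 : ℕ) : ZMod (2 * m)) := by push_cast; ring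
    rw [this, ZMod.val_natCast_of_lt (by omega)]
  have hgcd : Nat.gcd (2 * m) (m + 1) = 1 := by
    have h2 : Nat.Coprime 2 (m + 1) := by
      rw [Nat.coprime_two_left]
      exact Even.add_one ⟨2 ^ (n - 3), by rw [hm, ← two_mul, ← pow_succ']; congr 1; omega⟩
    have : Nat.Coprime (2 ^ (n - 1)) (m + 1) := h2.pow_left _
    have h2m : 2 * m = 2 ^ (n - 1) := by rw [hm, ← pow_succ']; congr 1; omega
    rw [h2m]; exact this
  have hord : orderOf ((QuaternionGroup.xa 0 : QuaternionGroup m) * QuaternionGroup.xa 1)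
      = 2 * m := by
    rw [hmul, QuaternionGroup.orderOf_a, hval, hgcd, Nat.div_one]
  have := h (QuaternionGroup.xa 0) (QuaternionGroup.xa 1)
  rw [hord, QuaternionGroup.orderOf_xa, QuaternionGroup.orderOf_xa] at this
  omega
end

section
/- For every n ≥ 4, the symmetric group Sₙ does not satisfy the CP₃ condition. -/
theorem stmt_11 (n : ℕ) (hn : 4 ≤ n) :
    ¬ (∀ a b : Equiv.Perm (Fin n), orderOf (a * b) < orderOf a + orderOf b) := by
  intro H
  set i0 : Fin n := ⟨0, by omega⟩
  set i1 : Fin n := ⟨1, by omega⟩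
  set i2 : Fin n := ⟨2, by omega⟩
  set i3 : Fin n := ⟨3, by omega⟩
  have h01 : i0 ≠ i1 := by simp [i0, i1, Fin.ext_iff]
  have h02 : i0 ≠ i2 := by simp [i0, i2, Fin.ext_iff]
  have h03 : i0 ≠ i3 := by simp [i0, i3, Fin.ext_iff]
  have h12 : i1 ≠ i2 := by simp [i1, i2, Fin.ext_iff]
  have h13 : i1 ≠ i3 := by simp [i1, i3, Fin.ext_iff]
  have h23 : i2 ≠ i3 := by simp [i2, i3, Fin.ext_iff]
  set a : Equiv.Perm (Fin n) := Equiv.swap i0 i1 with ha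
  set b : Equiv.Perm (Fin n) := Equiv.swap i1 i2 * Equiv.swap i0 i3 with hb
  -- action of b
  have f0 : b i0 = i3 := by
    rw [hb, Equiv.Perm.mul_apply, Equiv.swap_apply_left,
      Equiv.swap_apply_of_ne_of_ne h13.symm h23.symm]
  have f1 : b i1 = i2 := by
    rw [hb, Equiv.Perm.mul_apply, Equiv.swap_apply_of_ne_of_ne h01.symm h13,
      Equiv.swap_apply_left]
  have f2 : b i2 = i1 := by
    rw [hb, Equiv.Perm.mul_apply, Equiv.swap_apply_of_ne_of_ne h02.symm h23,
      Equiv.swap_apply_right]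
  have f3 : b i3 = i0 := by
    rw [hb, Equiv.Perm.mul_apply, Equiv.swap_apply_right,
      Equiv.swap_apply_of_ne_of_ne h01 h02]
  have fo : ∀ x, x ≠ i0 → x ≠ i1 → x ≠ i2 → x ≠ i3 → b x = x := by
    intro x hx0 hx1 hx2 hx3
    rw [hb, Equiv.Perm.mul_apply, Equiv.swap_apply_of_ne_of_ne hx0 hx3,
      Equiv.swap_apply_of_ne_of_ne hx1 hx2]
  -- action of a
  have g0 : a i0 = i1 := Equiv.swap_apply_left _ _
  have g1 : a i1 = i0 := Equiv.swap_apply_right _ _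
  have g2 : a i2 = i2 := Equiv.swap_apply_of_ne_of_ne h02.symm h12.symm
  have g3 : a i3 = i3 := Equiv.swap_apply_of_ne_of_ne h03.symm h13.symm
  have go : ∀ x, x ≠ i0 → x ≠ i1 → a x = x := fun x hx0 hx1 =>
    Equiv.swap_apply_of_ne_of_ne hx0 hx1
  -- action of c = a * b
  have e0 : (a * b) i0 = i3 := by rw [Equiv.Perm.mul_apply, f0, g3]
  have e1 : (a * b) i1 = i2 := by rw [Equiv.Perm.mul_apply, f1, g2]
  have e2 : (a * b) i2 = i0 := by rw [Equiv.Perm.mul_apply, f2, g1]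
  have e3 : (a * b) i3 = i1 := by rw [Equiv.Perm.mul_apply, f3, g0]
  have eo : ∀ x, x ≠ i0 → x ≠ i1 → x ≠ i2 → x ≠ i3 → (a * b) x = x := by
    intro x hx0 hx1 hx2 hx3
    rw [Equiv.Perm.mul_apply, fo x hx0 hx1 hx2 hx3, go x hx0 hx1]
  have hoa : orderOf a = 2 := by
    refine orderOf_eq_prime ?_ ?_
    · rw [ha, sq, Equiv.swap_mul_self]
    · intro h
      have := congrArg (fun p : Equiv.Perm (Fin n) => p i0) h
      simp only [Equiv.Perm.one_apply] at this
      rw [g0] at this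
      exact h01 this.symm
  have hob : orderOf b = 2 := by
    refine orderOf_eq_prime ?_ ?_
    · ext x
      rw [sq, Equiv.Perm.mul_apply, Equiv.Perm.one_apply]
      rcases eq_or_ne x i0 with rfl | hx0
      · rw [f0, f3]
      rcases eq_or_ne x i1 with rfl | hx1
      · rw [f1, f2]
      rcases eq_or_ne x i2 with rfl | hx2
      · rw [f2, f1]
      rcases eq_or_ne x i3 with rfl | hx3
      · rw [f3, f0]
      · rw [fo x hx0 hx1 hx2 hx3, fo x hx0 hx1 hx2 hx3]
    · intro h
      have := congrArg (fun p : Equiv.Perm (Fin n) => p i0) h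
      simp only [Equiv.Perm.one_apply] at this
      rw [f0] at this
      exact h03 this.symm
  have hc4 : (a * b) ^ 4 = 1 := by
    have h4 : ∀ x, (a * b) ((a * b) ((a * b) ((a * b) x))) = x := by
      intro x
      rcases eq_or_ne x i0 with rfl | hx0
      · rw [e0, e3, e1, e2]
      rcases eq_or_ne x i1 with rfl | hx1
      · rw [e1, e2, e0, e3]
      rcases eq_or_ne x i2 with rfl | hx2
      · rw [e2, e0, e3, e1]
      rcases eq_or_ne x i3 with rfl | hx3
      · rw [e3, e1, e2, e0]
      · rw [eo x hx0 hx1 hx2 hx3, eo x hx0 hx1 hx2 hx3,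
          eo x hx0 hx1 hx2 hx3, eo x hx0 hx1 hx2 hx3]
    ext x
    have : ((a * b) ^ 4) x = (a * b) ((a * b) ((a * b) ((a * b) x))) := by
      rw [show (4:ℕ) = 3 + 1 by norm_num, pow_succ, Equiv.Perm.mul_apply,
        show (3:ℕ) = 2 + 1 by norm_num, pow_succ, Equiv.Perm.mul_apply,
        sq, Equiv.Perm.mul_apply]
    rw [this, h4, Equiv.Perm.one_apply]
  have hc2 : (a * b) ^ 2 ≠ 1 := by
    intro h
    have := congrArg (fun p : Equiv.Perm (Fin n) => p i0) h
    simp only [Equiv.Perm.one_apply, sq, Equiv.Perm.mul_apply] at this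
    rw [f0, g3, f3, g0] at this
    exact h01 this.symm
  have hoc : orderOf (a * b) = 4 := by
    have := orderOf_eq_prime_pow (p := 2) (n := 1) (by simpa using hc2) (by simpa using hc4)
    simpa using this
  have := H a b
  rw [hoa, hob, hoc] at this
  omega
end

section
/- For every n ≥ 5, the alternating group Aₙ does not satisfy the CP₃ condition. -/
theorem stmt_12 (n : ℕ) (hn : 5 ≤ n) :
    ¬ (∀ a b : alternatingGroup (Fin n), orderOf (a * b) < orderOf a + orderOf b) := by
  intro h
  haveI : Fact (Nat.Prime 5) := ⟨by norm_num⟩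
  -- equiv from Fin 5 to the subtype of Fin n with val < 5
  have hlt : ∀ i : Fin 5, (i : ℕ) < n := fun i => lt_of_lt_of_le i.2 hn
  let p : Fin n → Prop := fun x => (x : ℕ) < 5
  haveI : DecidablePred p := fun x => Nat.decLt _ _
  let g : Fin 5 ≃ Subtype p :=
    { toFun := fun i => ⟨⟨i, hlt i⟩, i.2⟩
      invFun := fun x => ⟨(x : Fin n), x.2⟩
      left_inv := fun i => rfl
      right_inv := fun x => rfl }
  let φ : Equiv.Perm (Fin 5) →* Equiv.Perm (Fin n) := Equiv.Perm.extendDomainHom g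
  have hφ : Function.Injective φ := Equiv.Perm.extendDomainHom_injective g
  let σ : Equiv.Perm (Fin 5) := Equiv.swap 0 1 * Equiv.swap 2 3
  let τ : Equiv.Perm (Fin 5) := Equiv.swap 1 2 * Equiv.swap 3 4
  have hsσ : Equiv.Perm.sign σ = 1 := by decide
  have hsτ : Equiv.Perm.sign τ = 1 := by decide
  have ha : φ σ ∈ alternatingGroup (Fin n) := by
    rw [Equiv.Perm.mem_alternatingGroup]
    show Equiv.Perm.sign (σ.extendDomain g) = 1
    rw [Equiv.Perm.sign_extendDomain]; exact hsσ
  have hb : φ τ ∈ alternatingGroup (Fin n) := by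
    rw [Equiv.Perm.mem_alternatingGroup]
    show Equiv.Perm.sign (τ.extendDomain g) = 1
    rw [Equiv.Perm.sign_extendDomain]; exact hsτ
  have hoσ : orderOf (φ σ) = 2 := by
    rw [orderOf_injective φ hφ]
    apply orderOf_eq_prime
    · decide
    · decide
  have hoτ : orderOf (φ τ) = 2 := by
    rw [orderOf_injective φ hφ]
    apply orderOf_eq_prime
    · decide
    · decide
  have hoστ : orderOf (φ σ * φ τ) = 5 := by
    rw [← map_mul, orderOf_injective φ hφ]
    apply orderOf_eq_prime
    · decide
    · decide
  have := h ⟨φ σ, ha⟩ ⟨φ τ, hb⟩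
  rw [← orderOf_injective (alternatingGroup (Fin n)).subtype
      (Subgroup.subtype_injective _) (⟨φ σ, ha⟩ * ⟨φ τ, hb⟩),
    ← orderOf_injective (alternatingGroup (Fin n)).subtype
      (Subgroup.subtype_injective _) ⟨φ σ, ha⟩,
    ← orderOf_injective (alternatingGroup (Fin n)).subtype
      (Subgroup.subtype_injective _) ⟨φ τ, hb⟩] at this
  simp only [Subgroup.coe_subtype, Subgroup.coe_mul] at this
  rw [hoσ, hoτ, hoστ] at this
  omega
end

section
/- If a finite group G satisfies the CP₃ condition, then every element of G has prime power order. -/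
/-!
If `o(g) = r * s` with coprime `r, s > 1`, then `a = g ^ s` and `b = g ^ r` have orders dividing
`r` and `s`, while `a * b = g ^ (r + s)` still has order `r * s` because `r + s` is coprime to
`r * s`. The CP₃ condition would give `r * s < r + s`, impossible for `r, s ≥ 2`.
-/

theorem Nat.exists_coprime_mul_eq_of_not_isPrimePow {n : ℕ} (hn : ¬IsPrimePow n) (h0 : n ≠ 0)
    (h1 : n ≠ 1) : ∃ r s : ℕ, 1 < r ∧ 1 < s ∧ r.Coprime s ∧ r * s = n := by
  induction n using Nat.recOnPosPrimePosCoprime with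
  | prime_pow p k hp hk => exact absurd (hp.isPrimePow.pow hk.ne') hn
  | zero => exact absurd rfl h0
  | one => exact absurd rfl h1
  | coprime r s hr hs hrs => exact ⟨r, s, hr, hs, hrs, rfl⟩

theorem exists_mul_of_orderOf_eq_mul {M : Type*} [Monoid M] {g : M} {r s : ℕ}
    (hg : orderOf g = r * s) (hrs : r.Coprime s) :
    ∃ a b : M, orderOf a ∣ r ∧ orderOf b ∣ s ∧ orderOf (a * b) = r * s := by
  refine ⟨g ^ s, g ^ r, orderOf_dvd_of_pow_eq_one ?_, orderOf_dvd_of_pow_eq_one ?_, ?_⟩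
  · rw [← pow_mul, mul_comm, ← hg, pow_orderOf_eq_one]
  · rw [← pow_mul, ← hg, pow_orderOf_eq_one]
  · have hcop : (r * s).Coprime (s + r) :=
      Nat.Coprime.mul_left (Nat.coprime_add_self_right.mpr hrs)
        (Nat.coprime_self_add_right.mpr hrs.symm)
    rw [← pow_add, ← hg]
    exact (hg ▸ hcop).orderOf_pow

theorem stmt_13 (G : Type*) [Group G] [Fintype G]
    (h : ∀ a b : G, orderOf (a * b) < orderOf a + orderOf b) :
    ∀ g : G, IsPrimePow (orderOf g) ∨ orderOf g = 1 := by
  intro g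
  by_contra! hg
  obtain ⟨r, s, hr, hs, hrs, hg_eq⟩ :=
    Nat.exists_coprime_mul_eq_of_not_isPrimePow hg.1 (orderOf_pos g).ne' hg.2
  obtain ⟨a, b, ha, hb, hab⟩ := exists_mul_of_orderOf_eq_mul hg_eq.symm hrs
  have hlt := h a b
  rw [hab] at hlt
  have := Nat.le_of_dvd (by omega) ha
  have := Nat.le_of_dvd (by omega) hb
  nlinarith
end

section
/- Every abelian subgroup of a finite group satisfying the CP₃ condition is a p-group for some prime p. -/
/-!
Two commuting elements `a`, `b` of coprime orders `m, n ≥ 2` have `o(ab) = mn ≥ m + n`, which the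
CP₃ condition forbids. In a finite abelian CP₃ group, Cauchy's theorem therefore rules out two
distinct primes dividing the group order.
-/

def IsCP3 (G : Type*) [Monoid G] : Prop :=
  ∀ a b : G, orderOf (a * b) < orderOf a + orderOf b

theorem IsCP3.subgroup {G : Type*} [Group G] (hG : IsCP3 G) (H : Subgroup G) : IsCP3 H :=
  fun a b => by simpa only [← Subgroup.orderOf_coe, Subgroup.coe_mul] using hG a b

theorem IsCP3.eq_one_or_eq_one_of_coprime {G : Type*} [Monoid G] (hG : IsCP3 G) {a b : G}
    (hab : Commute a b) (hco : (orderOf a).Coprime (orderOf b)) : a = 1 ∨ b = 1 := by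
  by_contra! ⟨ha, hb⟩
  have ha₁ : orderOf a ≠ 1 := mt orderOf_eq_one_iff.mp ha
  have hb₁ : orderOf b ≠ 1 := mt orderOf_eq_one_iff.mp hb
  -- `Coprime 0 n` forces `n = 1`, so neither order is `0`.
  have ha₀ : orderOf a ≠ 0 := fun h0 => hb₁ (Nat.coprime_zero_left _ |>.mp (h0 ▸ hco))
  have hb₀ : orderOf b ≠ 0 := fun h0 => ha₁ (Nat.coprime_zero_right _ |>.mp (h0 ▸ hco))
  have hlt := hG a b
  rw [hab.orderOf_mul_eq_mul_orderOf_of_coprime hco] at hlt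
  have := Nat.add_le_mul (a := orderOf a) (b := orderOf b) (by omega) (by omega)
  omega

theorem IsCP3.prime_dvd_card_unique {G : Type*} [Group G] [Finite G] (hG : IsCP3 G)
    (hcomm : ∀ a b : G, Commute a b) {p q : ℕ} (hp : p.Prime) (hq : q.Prime)
    (hpG : p ∣ Nat.card G) (hqG : q ∣ Nat.card G) : p = q := by
  have := Fact.mk hp
  have := Fact.mk hq
  obtain ⟨a, ha⟩ := exists_prime_orderOf_dvd_card' p hpG
  obtain ⟨b, hb⟩ := exists_prime_orderOf_dvd_card' q hqG
  by_contra hpq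
  have hco : (orderOf a).Coprime (orderOf b) := by
    rw [ha, hb]
    exact (Nat.coprime_primes hp hq).mpr hpq
  rcases hG.eq_one_or_eq_one_of_coprime (hcomm a b) hco with rfl | rfl
  · exact hp.one_lt.ne (by simpa using ha)
  · exact hq.one_lt.ne (by simpa using hb)

theorem IsCP3.exists_isPGroup {G : Type*} [Group G] [Finite G] (hG : IsCP3 G)
    (hcomm : ∀ a b : G, Commute a b) : ∃ p : ℕ, p.Prime ∧ IsPGroup p G := by
  by_cases hone : Nat.card G = 1
  · exact ⟨2, Nat.prime_two, IsPGroup.of_card (n := 0) hone⟩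
  set p := (Nat.card G).minFac
  have hp : p.Prime := Nat.minFac_prime hone
  refine ⟨p, hp, IsPGroup.of_card (Nat.eq_prime_pow_of_unique_prime_dvd Nat.card_pos.ne' ?_)⟩
  exact fun hq hqG => hG.prime_dvd_card_unique hcomm hq hp hqG (Nat.minFac_dvd _)

theorem stmt_14 (G : Type*) [Group G] [Fintype G]
    (h : ∀ a b : G, orderOf (a * b) < orderOf a + orderOf b)
    (H : Subgroup G) (hH : ∀ a b : H, a * b = b * a) :
    ∃ p : ℕ, p.Prime ∧ IsPGroup p H :=
  IsCP3.exists_isPGroup (IsCP3.subgroup h H) hH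
end

section
/- A finite abelian group satisfies the CP₃ condition if and only if it is a p-group for some prime p. -/
theorem stmt_15 (G : Type*) [CommGroup G] [Fintype G] :
    (∀ a b : G, orderOf (a * b) < orderOf a + orderOf b) ↔
    ∃ p : ℕ, p.Prime ∧ IsPGroup p G := by
  constructor
  · intro h
    by_cases hG : Fintype.card G = 1
    · exact ⟨2, Nat.prime_two, IsPGroup.of_card (n := 0) (by simp [Nat.card_eq_fintype_card, hG])⟩
    · obtain ⟨p, hp, hpdvd⟩ := Nat.exists_prime_and_dvd hG
      haveI := Fact.mk hp
      refine ⟨p, hp, ?_⟩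
      rw [IsPGroup.iff_card]
      have key : ∀ q : ℕ, q.Prime → q ∣ Fintype.card G → q = p := by
        intro q hq hqdvd
        haveI := Fact.mk hq
        by_contra hne
        obtain ⟨a, ha⟩ := exists_prime_orderOf_dvd_card (G := G) p hpdvd
        obtain ⟨b, hb⟩ := exists_prime_orderOf_dvd_card (G := G) q hqdvd
        have hco : Nat.Coprime (orderOf a) (orderOf b) := by
          rw [ha, hb]
          exact (Nat.coprime_primes hp hq).mpr (Ne.symm hne)
        have := h a b
        rw [(Commute.all a b).orderOf_mul_eq_mul_orderOf_of_coprime hco, ha, hb] at this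
        nlinarith [hp.two_le, hq.two_le]
      have hcard : 0 < Fintype.card G := Fintype.card_pos
      refine ⟨(Fintype.card G).factorization p, ?_⟩
      rw [Nat.card_eq_fintype_card]
      conv_lhs => rw [← Nat.factorization_prod_pow_eq_self hcard.ne']
      rw [Nat.prod_factorization_eq_prod_primeFactors]
      have : (Fintype.card G).primeFactors = {p} := by
        ext q
        simp only [Nat.mem_primeFactors, Finset.mem_singleton]
        constructor
        · rintro ⟨hq, hqd, -⟩; exact key q hq hqd
        · rintro rfl; exact ⟨hp, hpdvd, hcard.ne'⟩
      rw [this, Finset.prod_singleton]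
  · rintro ⟨p, hp, hpg⟩ a b
    haveI := Fact.mk hp
    obtain ⟨m, hm⟩ := IsPGroup.iff_orderOf.mp hpg a
    obtain ⟨n, hn⟩ := IsPGroup.iff_orderOf.mp hpg b
    have hdvd := (Commute.all a b).orderOf_mul_dvd_lcm
    have hle : orderOf (a * b) ≤ p ^ (max m n) := by
      refine Nat.le_of_dvd (pow_pos hp.pos _) (hdvd.trans ?_)
      rw [hm, hn]
      exact Nat.lcm_dvd (pow_dvd_pow p (le_max_left m n)) (pow_dvd_pow p (le_max_right m n))
    have ha := orderOf_pos a
    have hb := orderOf_pos b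
    rcases le_total m n with hmn | hmn
    · rw [max_eq_right hmn, ← hn] at hle; omega
    · rw [max_eq_left hmn, ← hm] at hle; omega
end

section
/- Let p be a prime and G a finite p-group satisfying the CP₃ condition. Then for every i ≥ 0, the set Gᵢ = {x ∈ G : o(x) ≤ pⁱ} is a normal subgroup of G. -/
lemma pow_order (p : ℕ) (hp : p.Prime) {G : Type*} [Group G] (hG : IsPGroup p G)
    (x : G) : ∃ k : ℕ, orderOf x = p ^ k := by
  obtain ⟨k, hk⟩ := hG x
  have : orderOf x ∣ p ^ k := orderOf_dvd_of_pow_eq_one hk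
  obtain ⟨m, _, hm⟩ := (Nat.dvd_prime_pow hp).mp this
  exact ⟨m, hm⟩

theorem stmt_17 (p : ℕ) (hp : p.Prime) (G : Type*) [Group G] [Fintype G]
    (hG : IsPGroup p G)
    (h : ∀ a b : G, orderOf (a * b) < orderOf a + orderOf b) (i : ℕ) :
    ∃ H : Subgroup G, H.Normal ∧ (H : Set G) = {x : G | orderOf x ≤ p ^ i} := by
  have hmul : ∀ a b : G, orderOf a ≤ p ^ i → orderOf b ≤ p ^ i →
      orderOf (a * b) ≤ p ^ i := by
    intro a b ha hb
    obtain ⟨k, hk⟩ := pow_order p hp hG (a * b)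
    have h2 : orderOf (a * b) < p ^ (i + 1) := by
      calc orderOf (a * b) < orderOf a + orderOf b := h a b
        _ ≤ p ^ i + p ^ i := Nat.add_le_add ha hb
        _ = 2 * p ^ i := by ring
        _ ≤ p * p ^ i := Nat.mul_le_mul_right _ hp.two_le
        _ = p ^ (i + 1) := by ring
    rw [hk] at h2 ⊢
    have : k < i + 1 := (Nat.pow_lt_pow_iff_right hp.one_lt).mp h2
    exact Nat.pow_le_pow_right hp.pos (Nat.lt_succ_iff.mp this)
  refine ⟨{ carrier := {x : G | orderOf x ≤ p ^ i},
            mul_mem' := fun ha hb => hmul _ _ ha hb,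
            one_mem' := by simp [Nat.one_le_iff_ne_zero, pow_ne_zero, hp.pos.ne'],
            inv_mem' := by intro x hx; simpa using hx }, ?_, rfl⟩
  constructor
  intro n hn g
  have : orderOf (g * n * g⁻¹) = orderOf n :=
    (SemiconjBy.orderOf_eq g (by simp [SemiconjBy])).symm
  simpa [Set.mem_setOf_eq, this] using hn
end

section
/- Let p be a prime and G a finite p-group. Then G satisfies the CP₃ condition (o(ab) < o(a) + o(b) for all a, b) if and only if G satisfies the CP₂ condition (o(ab) ≤ max(o(a), o(b)) for all a, b). -/
theorem stmt_18 (p : ℕ) (hp : p.Prime) (G : Type*) [Group G] [Fintype G]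
    (hG : IsPGroup p G) :
    (∀ a b : G, orderOf (a * b) < orderOf a + orderOf b) ↔
    (∀ a b : G, orderOf (a * b) ≤ max (orderOf a) (orderOf b)) := by
  haveI : Fact p.Prime := ⟨hp⟩
  constructor
  · intro h a b
    obtain ⟨m, hm⟩ := IsPGroup.iff_orderOf.mp hG a
    obtain ⟨n, hn⟩ := IsPGroup.iff_orderOf.mp hG b
    obtain ⟨k, hk⟩ := IsPGroup.iff_orderOf.mp hG (a * b)
    rw [hm, hn, hk]
    rcases le_total m n with hmn | hmn
    · rw [max_eq_right (Nat.pow_le_pow_right hp.pos hmn)]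
      by_contra hlt
      push_neg at hlt
      have hk' : n + 1 ≤ k := by
        by_contra hc
        push_neg at hc
        exact absurd (Nat.pow_le_pow_right hp.pos (Nat.lt_succ_iff.mp hc)) (not_le.mpr hlt)
      have h1 : p ^ m + p ^ n ≤ 2 * p ^ n := by
        have := Nat.pow_le_pow_right hp.pos hmn
        omega
      have h2 : 2 * p ^ n ≤ p ^ (n + 1) := by
        rw [pow_succ, Nat.mul_comm 2]
        exact Nat.mul_le_mul_left _ hp.two_le
      have := h a b
      rw [hm, hn, hk] at this
      have h3 : p ^ (n + 1) ≤ p ^ k := Nat.pow_le_pow_right hp.pos hk'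
      omega
    · rw [max_eq_left (Nat.pow_le_pow_right hp.pos hmn)]
      by_contra hlt
      push_neg at hlt
      have hk' : m + 1 ≤ k := by
        by_contra hc
        push_neg at hc
        exact absurd (Nat.pow_le_pow_right hp.pos (Nat.lt_succ_iff.mp hc)) (not_le.mpr hlt)
      have h1 : p ^ m + p ^ n ≤ 2 * p ^ m := by
        have := Nat.pow_le_pow_right hp.pos hmn
        omega
      have h2 : 2 * p ^ m ≤ p ^ (m + 1) := by
        rw [pow_succ, Nat.mul_comm 2]
        exact Nat.mul_le_mul_left _ hp.two_le
      have := h a b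
      rw [hm, hn, hk] at this
      have h3 : p ^ (m + 1) ≤ p ^ k := Nat.pow_le_pow_right hp.pos hk'
      omega
  · intro h a b
    have ha := orderOf_pos a
    have hb := orderOf_pos b
    have := h a b
    rcases max_cases (orderOf a) (orderOf b) with ⟨he, _⟩ | ⟨he, _⟩ <;> omega
end
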